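/- arXiv:2312.00007 — 2 statements merged into one kernel-verified Lean document; each statement's English description precedes it below -/
import Mathlib

section
/- Consider one step of the Kalman filter starting from an initial estimate x̂ ∈ ℝⁿ and covariance P ∈ ℝ^{n×n} (symmetric), with model matrix M ∈ ℝ^{n×n}, control vector b ∈ ℝⁿ, model-error covariance Q (block diagonal Q = diag(Q1,Q2)), observation matrix H = [H1 H2] ∈ ℝ^{m×n}, observation y ∈ ℝᵐ, and observation-error covariance R ∈ ℝ^{m×m}, assuming H (M P Mᵀ + Q) Hᵀ + R is invertible. Let x̂⁺ denote the updated KF estimate obtained by the predictor step x⁺ = M x̂ + b, P⁺ = M P Mᵀ + Q, gain K = P⁺ Hᵀ (H P⁺ Hᵀ + R)⁻¹, corrector x̂⁺ = x⁺ + K (y − H x⁺). Let (x̂1⁺, x̂2⁺) denote the DD-KF estimates computed by the local predictor/corrector formulas using block restrictions of M, P, Q, H to index sets I1 = {1,...,n1}, I2 = {n1+1,...,n} (no overlap, s=0), with cross blocks P12, P21 initialized as the corresponding blocks of P and boundary terms b1 = M12 x̂|_{I2}, b2 = M21 x̂|_{I1}. Then x̂1⁺ = x̂⁺|_{I1} and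 x̂2⁺ = x̂⁺|_{I2}. -/
/-!
With the state indexed by `n₁ ⊕ n₂`, multiplying out the blocks shows that the global forecast
mean and covariance are `Sum.elim x1⁺ x2⁺` and `fromBlocks P1⁺ P12⁺ P21⁺ P2⁺`. Then `H P⁺ Hᵀ + R`
is exactly the matrix inverted in `F`, and `P⁺ Hᵀ` stacks the two local gain numerators, so the
global gain is `fromRows K1 K2` and the global correction splits into the two local ones.
-/

open Matrix

namespace Matrix

variable {α m n₁ n₂ : Type*} [Fintype n₁] [Fintype n₂]

section Semiring

variable [Semiring α]

theorem fromBlocks_mulVec_add (A : Matrix n₁ n₁ α) (B : Matrix n₁ n₂ α) (C : Matrix n₂ n₁ α)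
    (D : Matrix n₂ n₂ α) (x b : n₁ ⊕ n₂ → α) :
    fromBlocks A B C D *ᵥ x + b =
      Sum.elim (A *ᵥ (x ∘ Sum.inl) + b ∘ Sum.inl + B *ᵥ (x ∘ Sum.inr))
        (D *ᵥ (x ∘ Sum.inr) + b ∘ Sum.inr + C *ᵥ (x ∘ Sum.inl)) := by
  rw [fromBlocks_mulVec]
  ext (i | i) <;> simp only [Pi.add_apply, Sum.elim_inl, Sum.elim_inr] <;> abel

/-- The off-diagonal contributions grouped in parentheses are the paper's `P_{Ω1↔Ω2}`. -/
theorem fromBlocks_mul_mul_transpose (A : Matrix n₁ n₁ α) (B : Matrix n₁ n₂ α)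
    (C : Matrix n₂ n₁ α) (D : Matrix n₂ n₂ α) (P1 : Matrix n₁ n₁ α) (P12 : Matrix n₁ n₂ α)
    (P21 : Matrix n₂ n₁ α) (P2 : Matrix n₂ n₂ α) :
    fromBlocks A B C D * fromBlocks P1 P12 P21 P2 * (fromBlocks A B C D)ᵀ =
      fromBlocks (A * P1 * Aᵀ + (B * P21 * Aᵀ + A * P12 * Bᵀ + B * P2 * Bᵀ))
        (A * P12 * Dᵀ + (A * P1 * Cᵀ + B * P21 * Cᵀ + B * P2 * Dᵀ))
        (D * P21 * Aᵀ + (C * P1 * Aᵀ + C * P12 * Bᵀ + D * P2 * Bᵀ))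
        (D * P2 * Dᵀ + (C * P12 * Dᵀ + D * P21 * Cᵀ + C * P1 * Cᵀ)) := by
  rw [fromBlocks_transpose, fromBlocks_multiply, fromBlocks_multiply]
  congr 1 <;> simp only [Matrix.add_mul] <;> abel

theorem fromCols_mul_fromBlocks_mul_transpose [Fintype m] (H1 : Matrix m n₁ α)
    (H2 : Matrix m n₂ α) (P1 : Matrix n₁ n₁ α) (P12 : Matrix n₁ n₂ α) (P21 : Matrix n₂ n₁ α)
    (P2 : Matrix n₂ n₂ α) :
    fromCols H1 H2 * fromBlocks P1 P12 P21 P2 * (fromCols H1 H2)ᵀ =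
      H1 * P1 * H1ᵀ + H2 * P2 * H2ᵀ + H2 * P21 * H1ᵀ + H1 * P12 * H2ᵀ := by
  rw [transpose_fromCols, fromCols_mul_fromBlocks, fromCols_mul_fromRows, Matrix.add_mul,
    Matrix.add_mul]
  abel

theorem fromBlocks_mul_transpose_fromCols (H1 : Matrix m n₁ α) (H2 : Matrix m n₂ α)
    (P1 : Matrix n₁ n₁ α) (P12 : Matrix n₁ n₂ α) (P21 : Matrix n₂ n₁ α) (P2 : Matrix n₂ n₂ α) :
    fromBlocks P1 P12 P21 P2 * (fromCols H1 H2)ᵀ =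
      fromRows (P1 * H1ᵀ + P12 * H2ᵀ) (P2 * H2ᵀ + P21 * H1ᵀ) := by
  rw [transpose_fromCols, fromBlocks_mul_fromRows, add_comm (P21 * H1ᵀ)]

end Semiring

end Matrix

noncomputable def kalmanUpdate {α ι m : Type*} [CommRing α] [Fintype ι] [Fintype m]
    [DecidableEq m] (x : ι → α) (P : Matrix ι ι α) (H : Matrix m ι α) (R : Matrix m m α)
    (y : m → α) : ι → α :=
  x + (P * Hᵀ * (H * P * Hᵀ + R)⁻¹) *ᵥ (y - H *ᵥ x)

theorem kalmanUpdate_sumElim_fromBlocks {α m n₁ n₂ : Type*} [CommRing α] [Fintype m]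
    [DecidableEq m] [Fintype n₁] [Fintype n₂] (x1 : n₁ → α) (x2 : n₂ → α)
    (P1 : Matrix n₁ n₁ α) (P12 : Matrix n₁ n₂ α) (P21 : Matrix n₂ n₁ α) (P2 : Matrix n₂ n₂ α)
    (H1 : Matrix m n₁ α) (H2 : Matrix m n₂ α) (R : Matrix m m α) (y : m → α) :
    let F := (H1 * P1 * H1ᵀ + H2 * P2 * H2ᵀ + H2 * P21 * H1ᵀ + H1 * P12 * H2ᵀ + R)⁻¹
    let r := y - (H1 *ᵥ x1 + H2 *ᵥ x2)
    kalmanUpdate (Sum.elim x1 x2) (fromBlocks P1 P12 P21 P2) (fromCols H1 H2) R y =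
      Sum.elim (x1 + ((P1 * H1ᵀ + P12 * H2ᵀ) * F) *ᵥ r)
        (x2 + ((P2 * H2ᵀ + P21 * H1ᵀ) * F) *ᵥ r) := by
  intro F r
  rw [kalmanUpdate, fromCols_mul_fromBlocks_mul_transpose, fromBlocks_mul_transpose_fromCols,
    fromCols_mulVec_sumElim, fromRows_mul, fromRows_mulVec]
  ext (i | i) <;> rfl

theorem ddkf_one_step_consistency_general
    (m n₁ n₂ : Type*) [Fintype m] [Fintype n₁] [Fintype n₂]
    [DecidableEq m]
    (M1 : Matrix n₁ n₁ ℝ) (M12 : Matrix n₁ n₂ ℝ)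
    (M21 : Matrix n₂ n₁ ℝ) (M2 : Matrix n₂ n₂ ℝ)
    (P1 : Matrix n₁ n₁ ℝ) (P12 : Matrix n₁ n₂ ℝ)
    (P21 : Matrix n₂ n₁ ℝ) (P2 : Matrix n₂ n₂ ℝ)
    (Q1 : Matrix n₁ n₁ ℝ) (Q2 : Matrix n₂ n₂ ℝ)
    (H1 : Matrix m n₁ ℝ) (H2 : Matrix m n₂ ℝ)
    (R : Matrix m m ℝ)
    (xhat : (n₁ ⊕ n₂) → ℝ) (b : (n₁ ⊕ n₂) → ℝ) (y : m → ℝ) :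
    -- global KF step
    let M := Matrix.fromBlocks M1 M12 M21 M2
    let P := Matrix.fromBlocks P1 P12 P21 P2
    let Q := Matrix.fromBlocks Q1 0 0 Q2
    let H := Matrix.fromCols H1 H2
    let xp := M.mulVec xhat + b
    let Pp := M * P * Mᵀ + Q
    let K := Pp * Hᵀ * (H * Pp * Hᵀ + R)⁻¹
    let xhatPlus := xp + K.mulVec (y - H.mulVec xp)
    -- local DD-KF step
    let xhat1 := xhat ∘ Sum.inl
    let xhat2 := xhat ∘ Sum.inr
    let b1 := M12.mulVec xhat2
    let b2 := M21.mulVec xhat1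
    let x1p := M1.mulVec xhat1 + (b ∘ Sum.inl) + b1
    let x2p := M2.mulVec xhat2 + (b ∘ Sum.inr) + b2
    let P1p := M1 * P1 * M1ᵀ + (M12 * P21 * M1ᵀ + M1 * P12 * M12ᵀ + M12 * P2 * M12ᵀ) + Q1
    let P2p := M2 * P2 * M2ᵀ + (M21 * P12 * M2ᵀ + M2 * P21 * M21ᵀ + M21 * P1 * M21ᵀ) + Q2
    let P12p := M1 * P12 * M2ᵀ + (M1 * P1 * M21ᵀ + M12 * P21 * M21ᵀ + M12 * P2 * M2ᵀ)
    let P21p := M2 * P21 * M1ᵀ + (M21 * P1 * M1ᵀ + M21 * P12 * M12ᵀ + M2 * P2 * M12ᵀ)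
    let F := (H1 * P1p * H1ᵀ + H2 * P2p * H2ᵀ + H2 * P21p * H1ᵀ + H1 * P12p * H2ᵀ + R)⁻¹
    let K1 := (P1p * H1ᵀ + P12p * H2ᵀ) * F
    let K2 := (P2p * H2ᵀ + P21p * H1ᵀ) * F
    let xhat1Plus := x1p + K1.mulVec (y - (H1.mulVec x1p + H2.mulVec x2p))
    let xhat2Plus := x2p + K2.mulVec (y - (H1.mulVec x1p + H2.mulVec x2p))
    xhat1Plus = xhatPlus ∘ Sum.inl ∧ xhat2Plus = xhatPlus ∘ Sum.inr := by
  intro M P Q H xp Pp K xhatPlus xhat1 xhat2 b1 b2 x1p x2p P1p P2p P12p P21p F K1 K2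
    xhat1Plus xhat2Plus
  have hxp : xp = Sum.elim x1p x2p := fromBlocks_mulVec_add M1 M12 M21 M2 xhat b
  have hPp : Pp = fromBlocks P1p P12p P21p P2p := by
    change M * P * Mᵀ + Q = _
    rw [fromBlocks_mul_mul_transpose, fromBlocks_add, add_zero, add_zero]
  have hupdate :
      xhatPlus = kalmanUpdate (Sum.elim x1p x2p) (fromBlocks P1p P12p P21p P2p) H R y := by
    rw [← hxp, ← hPp]
    rfl
  rw [hupdate, kalmanUpdate_sumElim_fromBlocks]
  exact ⟨rfl, rfl⟩

/-- One-step DD-KF consistency (Theorem 1, non-overlapping case):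
the local DD-KF estimates equal the restrictions of the global KF estimate. -/
theorem ddkf_one_step_consistency
    (m n₁ n₂ : Type*) [Fintype m] [Fintype n₁] [Fintype n₂]
    [DecidableEq m] [DecidableEq n₁] [DecidableEq n₂]
    (M1 : Matrix n₁ n₁ ℝ) (M12 : Matrix n₁ n₂ ℝ)
    (M21 : Matrix n₂ n₁ ℝ) (M2 : Matrix n₂ n₂ ℝ)
    (P1 : Matrix n₁ n₁ ℝ) (P12 : Matrix n₁ n₂ ℝ)
    (P21 : Matrix n₂ n₁ ℝ) (P2 : Matrix n₂ n₂ ℝ)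
    (Q1 : Matrix n₁ n₁ ℝ) (Q2 : Matrix n₂ n₂ ℝ)
    (H1 : Matrix m n₁ ℝ) (H2 : Matrix m n₂ ℝ)
    (R : Matrix m m ℝ)
    (xhat : (n₁ ⊕ n₂) → ℝ) (b : (n₁ ⊕ n₂) → ℝ) (y : m → ℝ)
    (hPsym : (Matrix.fromBlocks P1 P12 P21 P2).IsHermitian)
    (hS : IsUnit (Matrix.fromCols H1 H2 *
        (Matrix.fromBlocks M1 M12 M21 M2 * Matrix.fromBlocks P1 P12 P21 P2 *
          (Matrix.fromBlocks M1 M12 M21 M2)ᵀ + Matrix.fromBlocks Q1 0 0 Q2) *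
        (Matrix.fromCols H1 H2)ᵀ + R)) :
    -- global KF step
    let M := Matrix.fromBlocks M1 M12 M21 M2
    let P := Matrix.fromBlocks P1 P12 P21 P2
    let Q := Matrix.fromBlocks Q1 0 0 Q2
    let H := Matrix.fromCols H1 H2
    let xp := M.mulVec xhat + b
    let Pp := M * P * Mᵀ + Q
    let K := Pp * Hᵀ * (H * Pp * Hᵀ + R)⁻¹
    let xhatPlus := xp + K.mulVec (y - H.mulVec xp)
    -- local DD-KF step
    let xhat1 := xhat ∘ Sum.inl
    let xhat2 := xhat ∘ Sum.inr
    let b1 := M12.mulVec xhat2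
    let b2 := M21.mulVec xhat1
    let x1p := M1.mulVec xhat1 + (b ∘ Sum.inl) + b1
    let x2p := M2.mulVec xhat2 + (b ∘ Sum.inr) + b2
    let P1p := M1 * P1 * M1ᵀ + (M12 * P21 * M1ᵀ + M1 * P12 * M12ᵀ + M12 * P2 * M12ᵀ) + Q1
    let P2p := M2 * P2 * M2ᵀ + (M21 * P12 * M2ᵀ + M2 * P21 * M21ᵀ + M21 * P1 * M21ᵀ) + Q2
    let P12p := M1 * P12 * M2ᵀ + (M1 * P1 * M21ᵀ + M12 * P21 * M21ᵀ + M12 * P2 * M2ᵀ)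
    let P21p := M2 * P21 * M1ᵀ + (M21 * P1 * M1ᵀ + M21 * P12 * M12ᵀ + M2 * P2 * M12ᵀ)
    let F := (H1 * P1p * H1ᵀ + H2 * P2p * H2ᵀ + H2 * P21p * H1ᵀ + H1 * P12p * H2ᵀ + R)⁻¹
    let K1 := (P1p * H1ᵀ + P12p * H2ᵀ) * F
    let K2 := (P2p * H2ᵀ + P21p * H1ᵀ) * F
    let xhat1Plus := x1p + K1.mulVec (y - (H1.mulVec x1p + H2.mulVec x2p))
    let xhat2Plus := x2p + K2.mulVec (y - (H1.mulVec x1p + H2.mulVec x2p))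
    xhat1Plus = xhatPlus ∘ Sum.inl ∧ xhat2Plus = xhatPlus ∘ Sum.inr :=
  ddkf_one_step_consistency_general m n₁ n₂ M1 M12 M21 M2 P1 P12 P21 P2 Q1 Q2 H1 H2 R xhat b y
end

section
/- Under the DD-KF consistency setting above (single step, two non-overlapping subdomains), the DD-KF gains satisfy K1 = K|_{I1} and K2 = K|_{I2}, where K = P⁺ Hᵀ (H P⁺ Hᵀ + R)⁻¹ is the global Kalman gain and K|_{Ii} denotes the rows of K indexed by Ii. -/
/-!
Split the state into the two subdomains. In block form, `M P Mᵀ + Q` has exactly the local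
blocks `P1⁺, P12⁺, P21⁺, P2⁺`; with `Hᵀ` split into row blocks, `P⁺ Hᵀ` is the stack of the
local numerators and `H P⁺ Hᵀ + R` is the local innovation matrix. So the global gain is the
stack of the two local gains, whether or not the innovation matrix is invertible: both sides
use the same inverse.
-/

open Matrix

namespace Matrix

variable {α m n₁ n₂ : Type*} [Fintype n₁] [Fintype n₂]

section Semiring

variable [Semiring α]

theorem fromBlocks_mul_fromBlocks_mul_transpose {p₁ p₂ : Type*}
    (A₁₁ : Matrix p₁ n₁ α) (A₁₂ : Matrix p₁ n₂ α) (A₂₁ : Matrix p₂ n₁ α) (A₂₂ : Matrix p₂ n₂ α)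
    (B₁₁ : Matrix n₁ n₁ α) (B₁₂ : Matrix n₁ n₂ α) (B₂₁ : Matrix n₂ n₁ α) (B₂₂ : Matrix n₂ n₂ α) :
    fromBlocks A₁₁ A₁₂ A₂₁ A₂₂ * fromBlocks B₁₁ B₁₂ B₂₁ B₂₂ * (fromBlocks A₁₁ A₁₂ A₂₁ A₂₂)ᵀ =
      fromBlocks
        (A₁₁ * B₁₁ * A₁₁ᵀ + A₁₂ * B₂₁ * A₁₁ᵀ + A₁₁ * B₁₂ * A₁₂ᵀ + A₁₂ * B₂₂ * A₁₂ᵀ)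
        (A₁₁ * B₁₁ * A₂₁ᵀ + A₁₂ * B₂₁ * A₂₁ᵀ + A₁₁ * B₁₂ * A₂₂ᵀ + A₁₂ * B₂₂ * A₂₂ᵀ)
        (A₂₁ * B₁₁ * A₁₁ᵀ + A₂₂ * B₂₁ * A₁₁ᵀ + A₂₁ * B₁₂ * A₁₂ᵀ + A₂₂ * B₂₂ * A₁₂ᵀ)
        (A₂₁ * B₁₁ * A₂₁ᵀ + A₂₂ * B₂₁ * A₂₁ᵀ + A₂₁ * B₁₂ * A₂₂ᵀ + A₂₂ * B₂₂ * A₂₂ᵀ) := by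
  simp only [fromBlocks_transpose, fromBlocks_multiply, Matrix.add_mul]
  congr 1 <;> abel

theorem fromBlocks_mul_transpose_fromCols_s7
    (B₁₁ : Matrix n₁ n₁ α) (B₁₂ : Matrix n₁ n₂ α) (B₂₁ : Matrix n₂ n₁ α) (B₂₂ : Matrix n₂ n₂ α)
    (H₁ : Matrix m n₁ α) (H₂ : Matrix m n₂ α) :
    fromBlocks B₁₁ B₁₂ B₂₁ B₂₂ * (fromCols H₁ H₂)ᵀ =
      fromRows (B₁₁ * H₁ᵀ + B₁₂ * H₂ᵀ) (B₂₁ * H₁ᵀ + B₂₂ * H₂ᵀ) := by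
  rw [transpose_fromCols, fromBlocks_mul_fromRows]

theorem fromCols_mul_fromBlocks_mul_transpose_fromCols
    (B₁₁ : Matrix n₁ n₁ α) (B₁₂ : Matrix n₁ n₂ α) (B₂₁ : Matrix n₂ n₁ α) (B₂₂ : Matrix n₂ n₂ α)
    (H₁ : Matrix m n₁ α) (H₂ : Matrix m n₂ α) :
    fromCols H₁ H₂ * fromBlocks B₁₁ B₁₂ B₂₁ B₂₂ * (fromCols H₁ H₂)ᵀ =
      H₁ * B₁₁ * H₁ᵀ + H₂ * B₂₂ * H₂ᵀ + H₂ * B₂₁ * H₁ᵀ + H₁ * B₁₂ * H₂ᵀ := by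
  rw [Matrix.mul_assoc, fromBlocks_mul_transpose_fromCols_s7, fromCols_mul_fromRows]
  simp only [Matrix.mul_add, ← Matrix.mul_assoc]
  abel

end Semiring

noncomputable def kalmanGain [Fintype m] [DecidableEq m] [CommRing α] {n : Type*} [Fintype n]
    (P : Matrix n n α) (H : Matrix m n α) (R : Matrix m m α) : Matrix n m α :=
  P * Hᵀ * (H * P * Hᵀ + R)⁻¹

theorem kalmanGain_fromBlocks_fromCols [Fintype m] [DecidableEq m] [CommRing α]
    (B₁₁ : Matrix n₁ n₁ α) (B₁₂ : Matrix n₁ n₂ α) (B₂₁ : Matrix n₂ n₁ α) (B₂₂ : Matrix n₂ n₂ α)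
    (H₁ : Matrix m n₁ α) (H₂ : Matrix m n₂ α) (R : Matrix m m α) :
    let S := H₁ * B₁₁ * H₁ᵀ + H₂ * B₂₂ * H₂ᵀ + H₂ * B₂₁ * H₁ᵀ + H₁ * B₁₂ * H₂ᵀ + R
    kalmanGain (fromBlocks B₁₁ B₁₂ B₂₁ B₂₂) (fromCols H₁ H₂) R =
      fromRows ((B₁₁ * H₁ᵀ + B₁₂ * H₂ᵀ) * S⁻¹) ((B₂₂ * H₂ᵀ + B₂₁ * H₁ᵀ) * S⁻¹) := by
  rw [kalmanGain, fromBlocks_mul_transpose_fromCols_s7,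
    fromCols_mul_fromBlocks_mul_transpose_fromCols, fromRows_mul, add_comm (B₂₁ * H₁ᵀ)]

end Matrix

theorem ddkf_gains_equal_global_gain_restrictions_general
    (m n₁ n₂ : Type*) [Fintype m] [Fintype n₁] [Fintype n₂]
    [DecidableEq m]
    (M1 : Matrix n₁ n₁ ℝ) (M12 : Matrix n₁ n₂ ℝ)
    (M21 : Matrix n₂ n₁ ℝ) (M2 : Matrix n₂ n₂ ℝ)
    (P1 : Matrix n₁ n₁ ℝ) (P12 : Matrix n₁ n₂ ℝ)
    (P21 : Matrix n₂ n₁ ℝ) (P2 : Matrix n₂ n₂ ℝ)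
    (Q1 : Matrix n₁ n₁ ℝ) (Q2 : Matrix n₂ n₂ ℝ)
    (H1 : Matrix m n₁ ℝ) (H2 : Matrix m n₂ ℝ)
    (R : Matrix m m ℝ) :
    let M := Matrix.fromBlocks M1 M12 M21 M2
    let P := Matrix.fromBlocks P1 P12 P21 P2
    let Q := Matrix.fromBlocks Q1 0 0 Q2
    let H := Matrix.fromCols H1 H2
    let Pp := M * P * Mᵀ + Q
    let K := Pp * Hᵀ * (H * Pp * Hᵀ + R)⁻¹
    let P1p := M1 * P1 * M1ᵀ + (M12 * P21 * M1ᵀ + M1 * P12 * M12ᵀ + M12 * P2 * M12ᵀ) + Q1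
    let P2p := M2 * P2 * M2ᵀ + (M21 * P12 * M2ᵀ + M2 * P21 * M21ᵀ + M21 * P1 * M21ᵀ) + Q2
    let P12p := M1 * P12 * M2ᵀ + (M1 * P1 * M21ᵀ + M12 * P21 * M21ᵀ + M12 * P2 * M2ᵀ)
    let P21p := M2 * P21 * M1ᵀ + (M21 * P1 * M1ᵀ + M21 * P12 * M12ᵀ + M2 * P2 * M12ᵀ)
    let F := (H1 * P1p * H1ᵀ + H2 * P2p * H2ᵀ + H2 * P21p * H1ᵀ + H1 * P12p * H2ᵀ + R)⁻¹
    let K1 := (P1p * H1ᵀ + P12p * H2ᵀ) * F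
    let K2 := (P2p * H2ᵀ + P21p * H1ᵀ) * F
    K1 = K.submatrix Sum.inl id ∧ K2 = K.submatrix Sum.inr id := by
  intro M P Q H Pp K P1p P2p P12p P21p F K1 K2
  have hPp : Pp = fromBlocks P1p P12p P21p P2p := by
    simp only [Pp, M, P, Q, P1p, P12p, P21p, P2p, fromBlocks_mul_fromBlocks_mul_transpose,
      fromBlocks_add, add_zero]
    congr 1 <;> abel
  have hK : K = fromRows K1 K2 := by
    change kalmanGain Pp H R = _
    rw [hPp, kalmanGain_fromBlocks_fromCols]
  rw [hK]
  exact ⟨rfl, rfl⟩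

/-- DD-KF gains equal the row restrictions of the global Kalman gain. -/
theorem ddkf_gains_equal_global_gain_restrictions
    (m n₁ n₂ : Type*) [Fintype m] [Fintype n₁] [Fintype n₂]
    [DecidableEq m] [DecidableEq n₁] [DecidableEq n₂]
    (M1 : Matrix n₁ n₁ ℝ) (M12 : Matrix n₁ n₂ ℝ)
    (M21 : Matrix n₂ n₁ ℝ) (M2 : Matrix n₂ n₂ ℝ)
    (P1 : Matrix n₁ n₁ ℝ) (P12 : Matrix n₁ n₂ ℝ)
    (P21 : Matrix n₂ n₁ ℝ) (P2 : Matrix n₂ n₂ ℝ)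
    (Q1 : Matrix n₁ n₁ ℝ) (Q2 : Matrix n₂ n₂ ℝ)
    (H1 : Matrix m n₁ ℝ) (H2 : Matrix m n₂ ℝ)
    (R : Matrix m m ℝ)
    (hPsym : (Matrix.fromBlocks P1 P12 P21 P2).IsHermitian)
    (hS : IsUnit (Matrix.fromCols H1 H2 *
        (Matrix.fromBlocks M1 M12 M21 M2 * Matrix.fromBlocks P1 P12 P21 P2 *
          (Matrix.fromBlocks M1 M12 M21 M2)ᵀ + Matrix.fromBlocks Q1 0 0 Q2) *
        (Matrix.fromCols H1 H2)ᵀ + R)) :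
    let M := Matrix.fromBlocks M1 M12 M21 M2
    let P := Matrix.fromBlocks P1 P12 P21 P2
    let Q := Matrix.fromBlocks Q1 0 0 Q2
    let H := Matrix.fromCols H1 H2
    let Pp := M * P * Mᵀ + Q
    let K := Pp * Hᵀ * (H * Pp * Hᵀ + R)⁻¹
    let P1p := M1 * P1 * M1ᵀ + (M12 * P21 * M1ᵀ + M1 * P12 * M12ᵀ + M12 * P2 * M12ᵀ) + Q1
    let P2p := M2 * P2 * M2ᵀ + (M21 * P12 * M2ᵀ + M2 * P21 * M21ᵀ + M21 * P1 * M21ᵀ) + Q2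
    let P12p := M1 * P12 * M2ᵀ + (M1 * P1 * M21ᵀ + M12 * P21 * M21ᵀ + M12 * P2 * M2ᵀ)
    let P21p := M2 * P21 * M1ᵀ + (M21 * P1 * M1ᵀ + M21 * P12 * M12ᵀ + M2 * P2 * M12ᵀ)
    let F := (H1 * P1p * H1ᵀ + H2 * P2p * H2ᵀ + H2 * P21p * H1ᵀ + H1 * P12p * H2ᵀ + R)⁻¹
    let K1 := (P1p * H1ᵀ + P12p * H2ᵀ) * F
    let K2 := (P2p * H2ᵀ + P21p * H1ᵀ) * F
    K1 = K.submatrix Sum.inl id ∧ K2 = K.submatrix Sum.inr id :=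
  ddkf_gains_equal_global_gain_restrictions_general m n₁ n₂ M1 M12 M21 M2 P1 P12 P21 P2 Q1 Q2 H1 H2
    R
end
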